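/- Let V be a real vector space with cone V₊ spanned nonnegatively by a basis, and let u', u'' be linear endomorphisms of V such that u'ξ − ξ ∈ V₊ and u''ξ − ξ ∈ V₊ for all ξ ∈ V₊. Set u = u' ∘ u''. Then the set of fixed vectors of u in V₊ equals the intersection of the sets of fixed vectors of u' and of u'' in V₊: {ξ ∈ V₊ : uξ = ξ} = {ξ ∈ V₊ : u'ξ = ξ} ∩ {ξ ∈ V₊ : u''ξ = ξ}. -/

import Mathlib

/-!
If `ξ ∈ V₊` is fixed by `u' ∘ u''`, then `η = u'' ξ - ξ ∈ V₊`, so `u'' ξ = ξ + η ∈ V₊`, and hence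
`-η = u' (u'' ξ) - u'' ξ ∈ V₊`. Since the cone is pointed, `η = 0`; thus `u'' ξ = ξ` and then `u' ξ = ξ`.
-/

theorem setOf_mem_comp_fixed_eq_inter {V : Type*} [AddCommGroup V] {C : Set V}
    (hadd : ∀ x ∈ C, ∀ y ∈ C, x + y ∈ C) (hpointed : ∀ x ∈ C, -x ∈ C → x = 0)
    {f g : V → V} (hf : ∀ x ∈ C, f x - x ∈ C) (hg : ∀ x ∈ C, g x - x ∈ C) :
    {x ∈ C | f (g x) = x} = {x ∈ C | f x = x} ∩ {x ∈ C | g x = x} := by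
  ext x
  constructor
  · rintro ⟨hx, hfix⟩
    have hgx_sub : g x - x ∈ C := hg x hx
    have hgx : g x ∈ C := by simpa using hadd _ hgx_sub _ hx
    have hneg : -(g x - x) ∈ C := by simpa [hfix] using hf _ hgx
    have hgx_eq : g x = x := sub_eq_zero.mp (hpointed _ hgx_sub hneg)
    exact ⟨⟨hx, by rwa [hgx_eq] at hfix⟩, hx, hgx_eq⟩
  · rintro ⟨⟨hx, hfx⟩, -, hgx⟩
    exact ⟨hx, by rw [hgx, hfx]⟩

theorem stmt3 {ι V : Type*} [AddCommGroup V] [Module ℝ V] (b : Module.Basis ι ℝ V)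
    (Vpos : Set V) (hVpos : Vpos = {x : V | ∀ i, 0 ≤ b.repr x i})
    (u' u'' : V →ₗ[ℝ] V)
    (h' : ∀ ξ ∈ Vpos, u' ξ - ξ ∈ Vpos) (h'' : ∀ ξ ∈ Vpos, u'' ξ - ξ ∈ Vpos)
    (u : V →ₗ[ℝ] V) (hu : u = u' ∘ₗ u'') :
    {ξ ∈ Vpos | u ξ = ξ} = {ξ ∈ Vpos | u' ξ = ξ} ∩ {ξ ∈ Vpos | u'' ξ = ξ} := by
  have hadd : ∀ x ∈ Vpos, ∀ y ∈ Vpos, x + y ∈ Vpos := by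
    subst hVpos
    exact fun x hx y hy i => by simpa using add_nonneg (hx i) (hy i)
  have hpointed : ∀ x ∈ Vpos, -x ∈ Vpos → x = 0 := by
    subst hVpos
    refine fun x hx hnx => b.repr.injective <| Finsupp.ext fun i => ?_
    have hxi : b.repr x i ≤ 0 := by simpa using hnx i
    simpa using le_antisymm hxi (hx i)
  subst hu
  exact setOf_mem_comp_fixed_eq_inter hadd hpointed h' h''
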